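/- Fix m < n in ℤ and x ≤ x′ in ℝ. For the Gaussian polymer with fixed continuous potential (F_k), and any y ∈ ℝ, the point-to-point polymer measure μ_{x,y}^{m,n} is stochastically dominated by μ_{x′,y}^{m,n} (as measures on ℝ^{n−m−1}, the intermediate coordinates, with the coordinatewise partial order). -/

import Mathlib

open MeasureTheory Set

noncomputable def gauss (u : ℝ) : ℝ := (Real.sqrt (2 * Real.pi))⁻¹ * Real.exp (-u ^ 2 / 2)

/-- The path `(x, z_1, …, z_s, y)`: `pathPoint s x y z i` is the `i`-th point. -/
noncomputable def pathPoint (s : ℕ) (x y : ℝ) (z : Fin s → ℝ) (i : ℕ) : ℝ :=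
  if h0 : i = 0 then x else if hs : i ≤ s then z ⟨i - 1, by omega⟩ else y

/-- The Gibbs weight `∏_{k=m}^{n-1} g(x_{k+1}-x_k) e^{-F_k(x_k)}` of the path from
`(m, x)` to `(n, y) = (m+s+1, y)` with intermediate points `z`. -/
noncomputable def pathWeight (F : ℤ → ℝ → ℝ) (m : ℤ) (s : ℕ) (x y : ℝ) (z : Fin s → ℝ) : ℝ :=
  ∏ k ∈ Finset.range (s + 1),
    gauss (pathPoint s x y z (k + 1) - pathPoint s x y z k) *
      Real.exp (-F (m + k) (pathPoint s x y z k))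

/-- The point-to-point polymer measure `μ_{x,y}^{m,n}` (on the `n-m-1 = s` intermediate
coordinates), i.e. the normalized measure with density `pathWeight`. -/
noncomputable def polymerMeasure (F : ℤ → ℝ → ℝ) (m : ℤ) (s : ℕ) (x y : ℝ) :
    Measure (Fin s → ℝ) :=
  (ENNReal.ofReal (∫ w : Fin s → ℝ, pathWeight F m s x y w))⁻¹ •
    volume.withDensity fun z => ENNReal.ofReal (pathWeight F m s x y z)

/-!
Induct on the number `s` of free points, splitting off the first one. Conditionally on the first
point `t`, the others follow the polymer started at `t`, and `t` itself has density proportional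
to `g(t - x) Z(t)`, with `Z(t)` the partition function of that shorter polymer. By induction the
conditional expectation `φ(t)` of a monotone `f` increases in `t`; since `g(t - x') / g(t - x)`
increases in `t` when `x ≤ x'`, the densities of the first point have monotone likelihood ratio,
and Chebyshev's inequality `∫∫ (φ(a) - φ(b)) (q(a) p(b) - q(b) p(a)) ≥ 0` for such densities
concludes. All integrals are finite since a potential of linear growth only contributes factors
`e^{C|t|}`, which the Gaussian kernel absorbs.
-/

open ProbabilityTheory

lemma integral_mul_mul_integral_le_of_monotone {α : Type*} [LinearOrder α] [MeasurableSpace α]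
    {μ : Measure α} [SFinite μ] {p q φ : α → ℝ} (hp : Integrable p μ) (hq : Integrable q μ)
    (hφp : Integrable (fun t => φ t * p t) μ) (hφq : Integrable (fun t => φ t * q t) μ)
    (hφ : Monotone φ) (hpq : ∀ a b, b ≤ a → q b * p a ≤ q a * p b) :
    (∫ t, φ t * p t ∂μ) * ∫ t, q t ∂μ ≤ (∫ t, φ t * q t ∂μ) * ∫ t, p t ∂μ := by
  have hpos : ∀ z : α × α, 0 ≤ (φ z.1 - φ z.2) * (q z.1 * p z.2 - q z.2 * p z.1) := by
    rintro ⟨a, b⟩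
    rcases le_total b a with h | h
    · exact mul_nonneg (sub_nonneg.2 (hφ h)) (sub_nonneg.2 (hpq a b h))
    · exact mul_nonneg_of_nonpos_of_nonpos (sub_nonpos.2 (hφ h)) (sub_nonpos.2 (hpq b a h))
  have h1 := hφq.mul_prod hp
  have h2 := hp.mul_prod hφq
  have h3 := hφp.mul_prod hq
  have h4 := hq.mul_prod hφp
  have key : 0 ≤ ∫ z, (φ z.1 - φ z.2) * (q z.1 * p z.2 - q z.2 * p z.1) ∂μ.prod μ :=
    integral_nonneg hpos
  have hexpand : (fun z : α × α => (φ z.1 - φ z.2) * (q z.1 * p z.2 - q z.2 * p z.1)) =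
      fun z => ((φ z.1 * q z.1) * p z.2 + p z.1 * (φ z.2 * q z.2)) -
        ((φ z.1 * p z.1) * q z.2 + q z.1 * (φ z.2 * p z.2)) := by
    ext z
    ring
  rw [hexpand, integral_sub, integral_add h1 h2, integral_add h3 h4,
    integral_prod_mul (fun a => φ a * q a) p, integral_prod_mul p (fun a => φ a * q a),
    integral_prod_mul (fun a => φ a * p a) q, integral_prod_mul q (fun a => φ a * p a)] at key
  · linarith
  · exact h1.add h2
  · exact h3.add h4

section ConsIntegral

variable {α : Type*} [MeasureSpace α] {s : ℕ}

lemma coe_piFinSuccAbove_zero_symm :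
    ⇑(MeasurableEquiv.piFinSuccAbove (fun _ : Fin (s + 1) => α) 0).symm =
      fun p : α × (Fin s → α) => Fin.cons p.1 p.2 := by
  ext p : 1
  simp [MeasurableEquiv.piFinSuccAbove_symm_apply, Fin.consEquiv]

lemma measurableEmbedding_cons :
    MeasurableEmbedding (fun p : α × (Fin s → α) => (Fin.cons p.1 p.2 : Fin (s + 1) → α)) := by
  rw [← coe_piFinSuccAbove_zero_symm]
  exact MeasurableEquiv.measurableEmbedding _

lemma Measurable.comp_fin_cons {β : Type*} [MeasurableSpace β] {f : (Fin (s + 1) → α) → β}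
    (hf : Measurable f) (t : α) : Measurable fun w => f (Fin.cons t w) :=
  hf.comp (measurableEmbedding_cons.measurable.comp (measurable_const.prodMk measurable_id))

variable [SigmaFinite (volume : Measure α)]

lemma measurePreserving_cons :
    MeasurePreserving (fun p : α × (Fin s → α) => (Fin.cons p.1 p.2 : Fin (s + 1) → α))
      ((volume : Measure α).prod volume) volume := by
  rw [← coe_piFinSuccAbove_zero_symm]
  exact (volume_preserving_piFinSuccAbove (fun _ => α) 0).symm _

variable {E : Type*} [NormedAddCommGroup E]

lemma integrable_comp_cons_iff {g : (Fin (s + 1) → α) → E} :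
    Integrable (fun p : α × (Fin s → α) => g (Fin.cons p.1 p.2)) ((volume : Measure α).prod volume)
      ↔ Integrable g :=
  measurePreserving_cons.integrable_comp_emb measurableEmbedding_cons

lemma integrable_of_integral_norm_cons_le {g : (Fin (s + 1) → α) → E}
    (hg : AEStronglyMeasurable g) (hsec : ∀ t, Integrable fun w => g (Fin.cons t w))
    {b : α → ℝ} (hb : Integrable b) (hle : ∀ t, ∫ w, ‖g (Fin.cons t w)‖ ≤ b t) :
    Integrable g := by
  have hgc := hg.comp_measurePreserving (measurePreserving_cons (α := α))
  refine integrable_comp_cons_iff.1 <| (integrable_prod_iff hgc).2 ⟨ae_of_all _ hsec, ?_⟩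
  refine hb.mono' hgc.norm.integral_prod_right' (ae_of_all _ fun t => ?_)
  exact (Real.norm_of_nonneg (integral_nonneg fun _ => norm_nonneg _)).trans_le (hle t)

variable [NormedSpace ℝ E]

lemma MeasureTheory.Integrable.integral_cons {g : (Fin (s + 1) → α) → E} (hg : Integrable g) :
    Integrable (fun t => ∫ w, g (Fin.cons t w)) :=
  (integrable_comp_cons_iff.2 hg).integral_prod_left

lemma integral_eq_integral_cons {g : (Fin (s + 1) → α) → E} (hg : Integrable g) :
    ∫ z, g z = ∫ t, ∫ w, g (Fin.cons t w) := by
  rw [← measurePreserving_cons.integral_comp measurableEmbedding_cons,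
    integral_prod _ (integrable_comp_cons_iff.2 hg)]

end ConsIntegral

lemma integral_fin_zero (h : (Fin 0 → ℝ) → ℝ) : ∫ z, h z = h default := by
  have hvol : (volume : Measure (Fin 0 → ℝ)).real univ = 1 := by
    simp [Measure.real, volume_pi]
  rw [integral_unique, hvol, one_smul]
  exact congrArg h (Subsingleton.elim _ _)

lemma exp_neg_le_of_abs_le {φ : ℝ → ℝ} {C : ℝ} (h : ∀ t, |φ t| ≤ C * (|t| + 1)) (t : ℝ) :
    Real.exp (-φ t) ≤ Real.exp C * Real.exp (C * |t|) := by
  rw [← Real.exp_add]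
  gcongr
  linarith [neg_abs_le (φ t), h t]

section Gauss

lemma gauss_pos (u : ℝ) : 0 < gauss u := by
  unfold gauss
  positivity

@[fun_prop]
lemma continuous_gauss : Continuous gauss := by
  unfold gauss
  fun_prop

lemma gauss_le_gauss_zero (u : ℝ) : gauss u ≤ gauss 0 := by
  unfold gauss
  exact mul_le_mul_of_nonneg_left (Real.exp_le_exp.2 (by nlinarith [sq_nonneg u])) (by positivity)

lemma gauss_sub_mul_gauss_sub_le {a b x x' : ℝ} (hab : b ≤ a) (hxx : x ≤ x') :
    gauss (b - x') * gauss (a - x) ≤ gauss (a - x') * gauss (b - x) := by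
  simp only [gauss, mul_mul_mul_comm _ (Real.exp _), ← Real.exp_add]
  refine mul_le_mul_of_nonneg_left (Real.exp_le_exp.2 ?_) (by positivity)
  nlinarith [mul_nonneg (sub_nonneg.2 hab) (sub_nonneg.2 hxx)]

lemma gauss_eq_gaussianPDFReal (u : ℝ) : gauss u = gaussianPDFReal 0 1 u := by
  simp [gauss, gaussianPDFReal]

lemma integrable_gauss_mul_exp_mul_abs (c : ℝ) :
    Integrable fun u => gauss u * Real.exp (c * |u|) := by
  have h : Integrable (fun u => Real.exp (c * |u|)) (gaussianReal 0 1) :=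
    integrable_exp_mul_abs (integrable_exp_mul_gaussianReal c)
      (integrable_exp_mul_gaussianReal (-c))
  rw [gaussianReal_of_var_ne_zero _ one_ne_zero, integrable_withDensity_iff_integrable_smul'
    (measurable_gaussianPDF _ _) (ae_of_all _ fun _ => gaussianPDF_lt_top)] at h
  simpa [toReal_gaussianPDF, gauss_eq_gaussianPDFReal] using h

variable {c : ℝ} (hc : 0 ≤ c) (a : ℝ)
include hc

lemma gauss_sub_mul_exp_mul_abs_le (t : ℝ) :
    gauss (t - a) * Real.exp (c * |t|) ≤
      Real.exp (c * |a|) * (gauss (t - a) * Real.exp (c * |t - a|)) := by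
  rw [mul_left_comm, ← Real.exp_add]
  gcongr
  · exact (gauss_pos _).le
  · nlinarith [abs_sub_abs_le_abs_sub t a]

lemma integrable_gauss_sub_mul_exp_mul_abs :
    Integrable fun t => gauss (t - a) * Real.exp (c * |t|) := by
  refine (((integrable_gauss_mul_exp_mul_abs c).comp_sub_right a).const_mul
    (Real.exp (c * |a|))).mono' (by fun_prop) (ae_of_all _ fun t => ?_)
  rw [Real.norm_of_nonneg (mul_nonneg (gauss_pos _).le (Real.exp_pos _).le)]
  exact gauss_sub_mul_exp_mul_abs_le hc a t

lemma integral_gauss_sub_mul_exp_mul_abs_le :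
    ∫ t, gauss (t - a) * Real.exp (c * |t|) ≤
      Real.exp (c * |a|) * ∫ u, gauss u * Real.exp (c * |u|) := by
  rw [← integral_sub_right_eq_self (fun u => gauss u * Real.exp (c * |u|)) a,
    ← integral_const_mul]
  exact integral_mono (integrable_gauss_sub_mul_exp_mul_abs hc a)
    (((integrable_gauss_mul_exp_mul_abs c).comp_sub_right a).const_mul _)
    (gauss_sub_mul_exp_mul_abs_le hc a)

end Gauss

section PathWeight

variable {F : ℤ → ℝ → ℝ} {m : ℤ} {s : ℕ} {x y : ℝ}

lemma pathPoint_cons_succ (t : ℝ) (w : Fin s → ℝ) (i : ℕ) :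
    pathPoint (s + 1) x y (Fin.cons t w) (i + 1) = pathPoint s t y w i := by
  unfold pathPoint
  rcases Nat.eq_zero_or_pos i with rfl | hi
  · simp
  by_cases h : i ≤ s
  · rw [dif_neg (by omega), dif_pos (by omega : i + 1 ≤ s + 1), dif_neg (by omega), dif_pos h]
    obtain ⟨j, rfl⟩ : ∃ j, i = j + 1 := ⟨i - 1, by omega⟩
    exact Fin.cons_succ (α := fun _ => ℝ) t w ⟨j, by omega⟩
  · rw [dif_neg (by omega), dif_neg (by omega), dif_neg (by omega), dif_neg h]

lemma pathWeight_cons (t : ℝ) (w : Fin s → ℝ) :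
    pathWeight F m (s + 1) x y (Fin.cons t w) =
      gauss (t - x) * Real.exp (-F m x) * pathWeight F (m + 1) s t y w := by
  rw [pathWeight, Finset.prod_range_succ', mul_comm, pathWeight]
  congr 1
  · simp [pathPoint]
  · refine Finset.prod_congr rfl fun k _ => ?_
    simp only [pathPoint_cons_succ]
    push_cast
    ring_nf

lemma pathWeight_fin_zero (z : Fin 0 → ℝ) :
    pathWeight F m 0 x y z = gauss (y - x) * Real.exp (-F m x) := by
  simp [pathWeight, pathPoint]

lemma pathWeight_pos (z : Fin s → ℝ) : 0 < pathWeight F m s x y z :=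
  Finset.prod_pos fun _ _ => mul_pos (gauss_pos _) (Real.exp_pos _)

lemma continuous_pathWeight (hF : ∀ k, Continuous (F k)) :
    Continuous (pathWeight F m s x y) := by
  have hpt : ∀ i, Continuous fun z : Fin s → ℝ => pathPoint s x y z i := by
    intro i
    unfold pathPoint
    split_ifs <;> fun_prop
  unfold pathWeight
  exact continuous_finsetProd _ fun k _ =>
    (continuous_gauss.comp ((hpt _).sub (hpt _))).mul
      (Real.continuous_exp.comp ((hF _).comp (hpt _)).neg)

end PathWeight

noncomputable def pathIntegral (F : ℤ → ℝ → ℝ) (m : ℤ) (s : ℕ) (x y : ℝ)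
    (f : (Fin s → ℝ) → ℝ) : ℝ :=
  ∫ z, f z * pathWeight F m s x y z

/-- `μ_{x,y}^{m,m+s+1}` increases stochastically in `x`, in cross-multiplied form. -/
def MonotoneInStart (F : ℤ → ℝ → ℝ) (m : ℤ) (s : ℕ) : Prop :=
  ∀ x x' y : ℝ, x ≤ x' → ∀ f : (Fin s → ℝ) → ℝ, Measurable f → Monotone f →
    ∀ C, (∀ z, |f z| ≤ C) →
      pathIntegral F m s x y f * pathIntegral F m s x' y (fun _ => 1) ≤
        pathIntegral F m s x' y f * pathIntegral F m s x y (fun _ => 1)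

section PathIntegral

variable {F : ℤ → ℝ → ℝ} {m : ℤ} {s : ℕ} {x y : ℝ}

lemma integral_mul_pathWeight_cons (f : (Fin (s + 1) → ℝ) → ℝ) (t : ℝ) :
    ∫ w, f (Fin.cons t w) * pathWeight F m (s + 1) x y (Fin.cons t w) =
      Real.exp (-F m x) *
        (gauss (t - x) * pathIntegral F (m + 1) s t y fun w => f (Fin.cons t w)) := by
  simp_rw [pathWeight_cons, pathIntegral, ← integral_const_mul]
  congr 1
  ext w
  ring

lemma monotoneInStart_zero : MonotoneInStart F m 0 := by
  intro x x' y _ f _ _ _ _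
  simp only [pathIntegral, integral_fin_zero, pathWeight_fin_zero]
  exact le_of_eq (by ring)

lemma integral_polymerMeasure (hF : ∀ k, Continuous (F k)) (f : (Fin s → ℝ) → ℝ) :
    ∫ z, f z ∂polymerMeasure F m s x y =
      pathIntegral F m s x y f / pathIntegral F m s x y fun _ => 1 := by
  have hW : Measurable fun z => (pathWeight F m s x y z).toNNReal :=
    (continuous_pathWeight hF).measurable.real_toNNReal
  have hZ : 0 ≤ ∫ z, pathWeight F m s x y z := integral_nonneg fun z => (pathWeight_pos z).le
  simp only [polymerMeasure, pathIntegral, one_mul, integral_smul_measure, ENNReal.ofReal,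
    integral_withDensity_eq_integral_smul hW, NNReal.smul_def, smul_eq_mul,
    Real.coe_toNNReal _ (pathWeight_pos _).le, ENNReal.toReal_inv, ENNReal.coe_toReal,
    Real.coe_toNNReal _ hZ]
  rw [inv_mul_eq_div]
  simp_rw [mul_comm (pathWeight F m s x y _)]

variable (hF : ∀ k, Continuous (F k)) (hgrow : ∀ k, ∃ C, ∀ t, |F k t| ≤ C * (|t| + 1))
include hF hgrow

lemma exists_integral_pathWeight_le (y : ℝ) (s : ℕ) (m : ℤ) :
    ∃ c B, 0 ≤ c ∧ 0 ≤ B ∧ ∀ x, Integrable (pathWeight F m s x y) ∧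
      ∫ z, pathWeight F m s x y z ≤ B * Real.exp (c * |x|) := by
  induction s generalizing m with
  | zero =>
    obtain ⟨C, hC⟩ := hgrow m
    have hC0 : 0 ≤ C := by simpa using (abs_nonneg _).trans (hC 0)
    refine ⟨C, gauss 0 * Real.exp C, hC0, (mul_pos (gauss_pos 0) (Real.exp_pos C)).le,
      fun x => ⟨?_, ?_⟩⟩
    · rw [show pathWeight F m 0 x y = fun _ => gauss (y - x) * Real.exp (-F m x) from
        funext pathWeight_fin_zero]
      exact integrable_const _
    · rw [integral_fin_zero, pathWeight_fin_zero, mul_assoc]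
      exact mul_le_mul (gauss_le_gauss_zero _) (exp_neg_le_of_abs_le hC x)
        (Real.exp_pos _).le (gauss_pos 0).le
  | succ s ih =>
    obtain ⟨c, B, hc, hB, hW⟩ := ih (m + 1)
    obtain ⟨C, hC⟩ := hgrow m
    have hC0 : 0 ≤ C := by simpa using (abs_nonneg _).trans (hC 0)
    set K := ∫ u, gauss u * Real.exp (c * |u|)
    have hK : 0 ≤ K := integral_nonneg fun u => mul_nonneg (gauss_pos u).le (Real.exp_pos _).le
    refine ⟨c + C, B * K * Real.exp C, by positivity, by positivity, fun x => ?_⟩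
    set κ := Real.exp (-F m x)
    have hsec : ∀ t, ∫ w, pathWeight F m (s + 1) x y (Fin.cons t w) =
        gauss (t - x) * κ * ∫ w, pathWeight F (m + 1) s t y w := fun t => by
      simp_rw [pathWeight_cons]
      exact integral_const_mul _ _
    have hdom : ∀ t, gauss (t - x) * κ * ∫ w, pathWeight F (m + 1) s t y w ≤
        κ * B * (gauss (t - x) * Real.exp (c * |t|)) := fun t => by
      have := mul_le_mul_of_nonneg_left (hW t).2
        (mul_pos (gauss_pos (t - x)) (Real.exp_pos (-F m x))).le
      linarith
    have hint : Integrable (pathWeight F m (s + 1) x y) := by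
      refine integrable_of_integral_norm_cons_le (continuous_pathWeight hF).aestronglyMeasurable
        (fun t => ?_) ((integrable_gauss_sub_mul_exp_mul_abs hc x).const_mul (κ * B))
        (fun t => ?_)
      · simp_rw [pathWeight_cons]
        exact (hW t).1.const_mul _
      · simp_rw [Real.norm_of_nonneg (pathWeight_pos _).le, hsec]
        exact hdom t
    refine ⟨hint, ?_⟩
    have hint' := hint.integral_cons
    simp_rw [hsec] at hint'
    calc ∫ z, pathWeight F m (s + 1) x y z
        = ∫ t, gauss (t - x) * κ * ∫ w, pathWeight F (m + 1) s t y w := by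
          rw [integral_eq_integral_cons hint]
          simp_rw [hsec]
      _ ≤ ∫ t, κ * B * (gauss (t - x) * Real.exp (c * |t|)) :=
          integral_mono hint' ((integrable_gauss_sub_mul_exp_mul_abs hc x).const_mul _) hdom
      _ = κ * B * ∫ t, gauss (t - x) * Real.exp (c * |t|) := integral_const_mul _ _
      _ ≤ κ * B * (Real.exp (c * |x|) * K) := by
          gcongr
          exact integral_gauss_sub_mul_exp_mul_abs_le hc x
      _ ≤ Real.exp C * Real.exp (C * |x|) * B * (Real.exp (c * |x|) * K) := by
          gcongr
          exact exp_neg_le_of_abs_le hC x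
      _ = B * K * Real.exp C * Real.exp ((c + C) * |x|) := by
          rw [add_mul, Real.exp_add]
          ring

lemma integrable_pathWeight : Integrable (pathWeight F m s x y) := by
  obtain ⟨_, _, _, _, h⟩ := exists_integral_pathWeight_le hF hgrow y s m
  exact (h x).1

lemma integrable_mul_pathWeight {f : (Fin s → ℝ) → ℝ} (hf : Measurable f) {C : ℝ}
    (hfC : ∀ z, |f z| ≤ C) : Integrable fun z => f z * pathWeight F m s x y z :=
  (integrable_pathWeight hF hgrow).bdd_mul hf.aestronglyMeasurable (ae_of_all _ hfC)

lemma pathIntegral_succ {f : (Fin (s + 1) → ℝ) → ℝ} (hf : Measurable f) {C : ℝ}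
    (hfC : ∀ z, |f z| ≤ C) :
    pathIntegral F m (s + 1) x y f =
      Real.exp (-F m x) *
        ∫ t, gauss (t - x) * pathIntegral F (m + 1) s t y fun w => f (Fin.cons t w) := by
  rw [pathIntegral, integral_eq_integral_cons (integrable_mul_pathWeight hF hgrow hf hfC)]
  simp_rw [integral_mul_pathWeight_cons]
  exact integral_const_mul _ _

lemma integrable_gauss_sub_mul_pathIntegral {f : (Fin (s + 1) → ℝ) → ℝ} (hf : Measurable f)
    {C : ℝ} (hfC : ∀ z, |f z| ≤ C) :
    Integrable fun t => gauss (t - x) * pathIntegral F (m + 1) s t y fun w => f (Fin.cons t w) := by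
  have h := (integrable_mul_pathWeight (m := m) (x := x) (y := y) hF hgrow hf hfC).integral_cons
  simp_rw [integral_mul_pathWeight_cons] at h
  exact (integrable_const_mul_iff (Real.exp_pos _).ne'.isUnit _).1 h

lemma pathIntegral_one_pos : 0 < pathIntegral F m s x y fun _ => 1 := by
  simp only [pathIntegral, one_mul]
  rw [integral_pos_iff_support_of_nonneg (fun z => (pathWeight_pos z).le)
    (integrable_pathWeight hF hgrow), Function.support_eq_univ fun z => (pathWeight_pos z).ne']
  exact Measure.measure_univ_pos.2 (NeZero.ne _)

lemma pathIntegral_mono {f g : (Fin s → ℝ) → ℝ} (hf : Measurable f) (hg : Measurable g)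
    {C : ℝ} (hfC : ∀ z, |f z| ≤ C) (hgC : ∀ z, |g z| ≤ C) (hfg : ∀ z, f z ≤ g z) :
    pathIntegral F m s x y f ≤ pathIntegral F m s x y g :=
  integral_mono (integrable_mul_pathWeight hF hgrow hf hfC)
    (integrable_mul_pathWeight hF hgrow hg hgC)
    fun z => mul_le_mul_of_nonneg_right (hfg z) (pathWeight_pos z).le

lemma monotone_pathIntegral_cons_div (ih : MonotoneInStart F m s)
    {f : (Fin (s + 1) → ℝ) → ℝ} (hf : Measurable f) (hfmono : Monotone f) {C : ℝ}
    (hfC : ∀ z, |f z| ≤ C) :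
    Monotone fun t =>
      (pathIntegral F m s t y fun w => f (Fin.cons t w)) / pathIntegral F m s t y fun _ => 1 := by
  intro t t' htt
  dsimp only
  rw [div_le_div_iff₀ (pathIntegral_one_pos hF hgrow) (pathIntegral_one_pos hF hgrow)]
  calc (pathIntegral F m s t y fun w => f (Fin.cons t w)) * pathIntegral F m s t' y (fun _ => 1)
      ≤ (pathIntegral F m s t' y fun w => f (Fin.cons t w)) *
          pathIntegral F m s t y (fun _ => 1) :=
        ih t t' y htt _ (hf.comp_fin_cons t)
          (fun w w' hw => hfmono (Fin.cons_le_cons.2 ⟨le_rfl, hw⟩)) C fun _ => hfC _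
    _ ≤ (pathIntegral F m s t' y fun w => f (Fin.cons t' w)) *
          pathIntegral F m s t y (fun _ => 1) := by
        refine mul_le_mul_of_nonneg_right ?_ (pathIntegral_one_pos hF hgrow).le
        exact pathIntegral_mono hF hgrow (hf.comp_fin_cons t) (hf.comp_fin_cons t')
          (fun _ => hfC _) (fun _ => hfC _) fun w => hfmono (Fin.cons_le_cons.2 ⟨htt, le_rfl⟩)

lemma MonotoneInStart.succ (ih : MonotoneInStart F (m + 1) s) : MonotoneInStart F m (s + 1) := by
  intro x x' y hxx f hf hfmono C hfC
  set Z := fun t => pathIntegral F (m + 1) s t y fun _ => 1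
  set H := fun t => pathIntegral F (m + 1) s t y fun w => f (Fin.cons t w)
  have hZ : ∀ t, 0 < Z t := fun t => pathIntegral_one_pos hF hgrow
  have hφ : ∀ a t, H t / Z t * (gauss (t - a) * Z t) = gauss (t - a) * H t := fun a t => by
    field_simp [(hZ t).ne']
  have hone : ∀ z : Fin (s + 1) → ℝ, |(fun _ => (1 : ℝ)) z| ≤ 1 := fun _ => by simp
  have key := integral_mul_mul_integral_le_of_monotone
    (p := fun t => gauss (t - x) * Z t) (q := fun t => gauss (t - x') * Z t)
    (φ := fun t => H t / Z t)
    (integrable_gauss_sub_mul_pathIntegral hF hgrow measurable_const hone)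
    (integrable_gauss_sub_mul_pathIntegral hF hgrow measurable_const hone)
    (by simp_rw [hφ]; exact integrable_gauss_sub_mul_pathIntegral hF hgrow hf hfC)
    (by simp_rw [hφ]; exact integrable_gauss_sub_mul_pathIntegral hF hgrow hf hfC)
    (monotone_pathIntegral_cons_div hF hgrow ih hf hfmono hfC)
    fun a b hab => by
      have := mul_le_mul_of_nonneg_right (gauss_sub_mul_gauss_sub_le hab hxx)
        (mul_pos (hZ a) (hZ b)).le
      linarith
  simp_rw [hφ] at key
  rw [pathIntegral_succ hF hgrow hf hfC, pathIntegral_succ hF hgrow hf hfC,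
    pathIntegral_succ hF hgrow measurable_const hone,
    pathIntegral_succ hF hgrow measurable_const hone]
  have := mul_le_mul_of_nonneg_left key
    (mul_pos (Real.exp_pos (-F m x)) (Real.exp_pos (-F m x'))).le
  linarith

lemma monotoneInStart (s : ℕ) (m : ℤ) : MonotoneInStart F m s := by
  induction s generalizing m with
  | zero => exact monotoneInStart_zero
  | succ s ih => exact (ih (m + 1)).succ hF hgrow

end PathIntegral

theorem stmt11 (F : ℤ → ℝ → ℝ) (hF : ∀ k, Continuous (F k))
    (hgrow : ∀ k, ∃ C, ∀ t, |F k t| ≤ C * (|t| + 1))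
    (m : ℤ) (s : ℕ) (x x' y : ℝ) (hxx : x ≤ x') :
    ∀ f : (Fin s → ℝ) → ℝ, Measurable f → Monotone f → (∃ C, ∀ z, |f z| ≤ C) →
      ∫ z, f z ∂(polymerMeasure F m s x y) ≤ ∫ z, f z ∂(polymerMeasure F m s x' y) := by
  rintro f hf hfmono ⟨C, hfC⟩
  rw [integral_polymerMeasure hF, integral_polymerMeasure hF,
    div_le_div_iff₀ (pathIntegral_one_pos hF hgrow) (pathIntegral_one_pos hF hgrow)]
  exact monotoneInStart hF hgrow s m x x' y hxx f hf hfmono C hfC
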